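/- arXiv:math/0312048 — 3 statements merged into one kernel-verified Lean document; each statement's English description precedes it below -/
import Mathlib

section
/- Let n ≥ 1 and let a₁, …, aₙ be strictly positive real numbers with ∏_{i=1}^n aᵢ = 1. Then ∫_{S^{n-1}} log(∑_{i=1}^n aᵢ uᵢ²) dσ(u) ≥ 0, where σ is the uniform probability measure on the unit sphere S^{n-1} ⊂ ℝⁿ and u = (u₁,…,uₙ). -/
open MeasureTheory Matrix Metric

/-- Borel measurable structure on real square matrices. -/
noncomputable instance matrixMeasurableSpace {n : ℕ} :
    MeasurableSpace (Matrix (Fin n) (Fin n) ℝ) := borel _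

instance matrixBorelSpace {n : ℕ} : BorelSpace (Matrix (Fin n) (Fin n) ℝ) := ⟨rfl⟩

/-- The spectral radius of a real square matrix: the maximum modulus of its complex
eigenvalues (elements of the spectrum of the matrix viewed over `ℂ`). -/
noncomputable def specRad {n : ℕ} (M : Matrix (Fin n) (Fin n) ℝ) : ℝ :=
  sSup ((fun z : ℂ => ‖z‖) '' spectrum ℂ (M.map (fun x => (x : ℂ))))

/-- The ℓ²-operator norm of a real square matrix (equal to its largest singular value). -/
noncomputable def opNorm {n : ℕ} (M : Matrix (Fin n) (Fin n) ℝ) : ℝ :=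
  ‖Matrix.toEuclideanCLM (𝕜 := ℝ) M‖

/-- The uniform (rotation-invariant) probability measure on the unit sphere
`S^{n-1} ⊆ ℝⁿ`: the normalization of the spherical measure induced by Lebesgue measure. -/
noncomputable def uniSphere (n : ℕ) :
    Measure (sphere (0 : EuclideanSpace ℝ (Fin n)) 1) :=
  ((volume : Measure (EuclideanSpace ℝ (Fin n))).toSphere Set.univ)⁻¹ •
    (volume : Measure (EuclideanSpace ℝ (Fin n))).toSphere


open scoped Pointwise

variable {n : ℕ}


/-- The measurable equiv of the unit sphere induced by a linear isometry equiv. -/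
noncomputable def sphereMEquiv (L : EuclideanSpace ℝ (Fin n) ≃ₗᵢ[ℝ] EuclideanSpace ℝ (Fin n)) :
    sphere (0 : EuclideanSpace ℝ (Fin n)) 1 ≃ᵐ sphere (0 : EuclideanSpace ℝ (Fin n)) 1 where
  toFun u := ⟨L u, mem_sphere_zero_iff_norm.mpr
    ((L.norm_map u).trans (mem_sphere_zero_iff_norm.mp u.2))⟩
  invFun u := ⟨L.symm u, mem_sphere_zero_iff_norm.mpr
    ((L.symm.norm_map u).trans (mem_sphere_zero_iff_norm.mp u.2))⟩
  left_inv u := Subtype.ext (L.symm_apply_apply u)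
  right_inv u := Subtype.ext (L.apply_symm_apply u)
  measurable_toFun := (((L.continuous.comp continuous_subtype_val).subtype_mk _)).measurable
  measurable_invFun := (((L.symm.continuous.comp continuous_subtype_val).subtype_mk _)).measurable

lemma sphereMEquiv_apply_coe (L : EuclideanSpace ℝ (Fin n) ≃ₗᵢ[ℝ] EuclideanSpace ℝ (Fin n))
    (u : sphere (0 : EuclideanSpace ℝ (Fin n)) 1) :
    ((sphereMEquiv L u : EuclideanSpace ℝ (Fin n))) = L u := rfl

lemma toSphere_map (L : EuclideanSpace ℝ (Fin n) ≃ₗᵢ[ℝ] EuclideanSpace ℝ (Fin n)) :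
    Measure.map (sphereMEquiv L) (volume : Measure (EuclideanSpace ℝ (Fin n))).toSphere
      = (volume : Measure (EuclideanSpace ℝ (Fin n))).toSphere := by
  ext s hs
  rw [MeasurableEquiv.map_apply, Measure.toSphere_apply' _ hs,
    Measure.toSphere_apply' _ ((sphereMEquiv L).measurable hs)]
  have h1 : (Subtype.val '' ((sphereMEquiv L) ⁻¹' s))
      = ⇑L ⁻¹' (Subtype.val '' s) := by
    ext x
    constructor
    · rintro ⟨u, hu, rfl⟩
      exact ⟨sphereMEquiv L u, hu, rfl⟩
    · rintro ⟨v, hv, hvx⟩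
      have hx : x ∈ sphere (0 : EuclideanSpace ℝ (Fin n)) 1 := by
        have : ‖x‖ = 1 := by
          rw [← L.norm_map x, ← hvx]
          exact mem_sphere_zero_iff_norm.mp v.2
        simpa [mem_sphere_zero_iff_norm] using this
      refine ⟨⟨x, hx⟩, ?_, rfl⟩
      have : sphereMEquiv L ⟨x, hx⟩ = v := Subtype.ext hvx.symm
      simpa [this] using hv
  have h2 : Set.Ioo (0:ℝ) 1 • (⇑L ⁻¹' (Subtype.val '' s))
      = ⇑L ⁻¹' (Set.Ioo (0:ℝ) 1 • (Subtype.val '' s)) := by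
    ext x
    constructor
    · rintro ⟨r, hr, y, hy, rfl⟩
      exact ⟨r, hr, L y, hy, (L.map_smul r y).symm⟩
    · rintro ⟨r, hr, y, hy, hxy⟩
      refine ⟨r, hr, L.symm y, by simpa using hy, ?_⟩
      have := congrArg L.symm hxy
      simpa [_root_.map_smul] using this
  rw [h1, h2]
  congr 1
  calc volume (⇑L ⁻¹' (Set.Ioo (0:ℝ) 1 • Subtype.val '' s))
      = volume (⇑L.toMeasurableEquiv ⁻¹' (Set.Ioo (0:ℝ) 1 • Subtype.val '' s)) := rfl
    _ = (Measure.map (⇑L.toMeasurableEquiv) volume) (Set.Ioo (0:ℝ) 1 • Subtype.val '' s) :=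
        (L.toMeasurableEquiv.map_apply _).symm
    _ = volume (Set.Ioo (0:ℝ) 1 • Subtype.val '' s) := by
        rw [show ⇑L.toMeasurableEquiv = ⇑L from rfl, L.measurePreserving.map_eq]

lemma uniSphere_comp (L : EuclideanSpace ℝ (Fin n) ≃ₗᵢ[ℝ] EuclideanSpace ℝ (Fin n))
    (f : sphere (0 : EuclideanSpace ℝ (Fin n)) 1 → ℝ) :
    ∫ u, f (sphereMEquiv L u) ∂(uniSphere n) = ∫ u, f u ∂(uniSphere n) := by
  have hp : MeasurePreserving (sphereMEquiv L) (uniSphere n) (uniSphere n) := by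
    refine ⟨(sphereMEquiv L).measurable, ?_⟩
    unfold uniSphere
    rw [Measure.map_smul, toSphere_map]
  exact hp.integral_comp (sphereMEquiv L).measurableEmbedding f

variable {n : ℕ}


-- sum of squares of coordinates of a sphere point
lemma sphere_sum_sq (u : sphere (0 : EuclideanSpace ℝ (Fin n)) 1) :
    ∑ i, ((u : EuclideanSpace ℝ (Fin n)) i) ^ 2 = 1 := by
  have h : ‖(u : EuclideanSpace ℝ (Fin n))‖ = 1 := mem_sphere_zero_iff_norm.mp u.2
  have := EuclideanSpace.norm_eq (u : EuclideanSpace ℝ (Fin n))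
  rw [h] at this
  have h2 : (1:ℝ) = ∑ i, ‖(u : EuclideanSpace ℝ (Fin n)) i‖ ^ 2 := by
    have := congrArg (fun x : ℝ => x ^ 2) this
    simpa [Real.sq_sqrt (Finset.sum_nonneg fun i _ => sq_nonneg _)] using this
  simpa [Real.norm_eq_abs, sq_abs] using h2.symm

-- continuity of coordinates
lemma cont_coord (i : Fin n) :
    Continuous (fun u : sphere (0 : EuclideanSpace ℝ (Fin n)) 1 =>
      ((u : EuclideanSpace ℝ (Fin n)) i)) :=
  (EuclideanSpace.proj (𝕜 := ℝ) i).continuous.comp continuous_subtype_val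

lemma integrable_of_continuous [IsFiniteMeasure (uniSphere n)]
    {f : sphere (0 : EuclideanSpace ℝ (Fin n)) 1 → ℝ} (hf : Continuous f) :
    Integrable f (uniSphere n) := by
  have := hf.continuousOn.integrableOn_compact (isCompact_univ
    (X := sphere (0 : EuclideanSpace ℝ (Fin n)) 1)) (μ := uniSphere n)
  simpa [IntegrableOn] using this

instance uniSphere_finite : IsFiniteMeasure (uniSphere n) := by
  constructor
  rw [uniSphere, Measure.smul_apply, smul_eq_mul]
  rcases eq_or_ne ((volume : Measure (EuclideanSpace ℝ (Fin n))).toSphere Set.univ) 0 with h | h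
  · simp [h]
  · rw [ENNReal.inv_mul_cancel h (measure_ne_top _ _)]
    exact ENNReal.one_lt_top

/-- For `n ≥ 1` and positive reals `a₁,…,aₙ` with `∏ aᵢ = 1`, the integral
of `log (∑ aᵢ uᵢ²)` over the unit sphere (uniform probability measure) is nonnegative. -/
theorem sphere_log_weighted_sum_integral_nonneg (n : ℕ) (hn : 1 ≤ n)
    (a : Fin n → ℝ) (ha : ∀ i, 0 < a i) (hprod : ∏ i, a i = 1) :
    0 ≤ ∫ u : sphere (0 : EuclideanSpace ℝ (Fin n)) 1,
        Real.log (∑ i, a i * ((u : EuclideanSpace ℝ (Fin n)) i) ^ 2) ∂(uniSphere n) := by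
  classical
  set σ := uniSphere n with hσ
  have hpos : ∀ u : sphere (0 : EuclideanSpace ℝ (Fin n)) 1,
      0 < ∑ i, a i * ((u : EuclideanSpace ℝ (Fin n)) i) ^ 2 := by
    intro u
    have h1 := sphere_sum_sq u
    obtain ⟨i, hi⟩ : ∃ i, ((u : EuclideanSpace ℝ (Fin n)) i) ^ 2 ≠ 0 := by
      by_contra h
      push_neg at h
      rw [Finset.sum_congr rfl (fun i _ => h i)] at h1
      simp at h1
    refine Finset.sum_pos' (fun j _ => mul_nonneg (ha j).le (sq_nonneg _))
      ⟨i, Finset.mem_univ i, ?_⟩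
    exact mul_pos (ha i) ((sq_nonneg _).lt_of_ne (Ne.symm hi))
  have hfc : Continuous (fun u : sphere (0 : EuclideanSpace ℝ (Fin n)) 1 =>
      Real.log (∑ i, a i * ((u : EuclideanSpace ℝ (Fin n)) i) ^ 2)) := by
    apply Continuous.log
    · exact continuous_finset_sum _ fun i _ => continuous_const.mul ((cont_coord i).pow 2)
    · exact fun u => (hpos u).ne'
  have hf_int := integrable_of_continuous hfc
  have hg_int : ∀ i : Fin n, Integrable
      (fun u : sphere (0 : EuclideanSpace ℝ (Fin n)) 1 =>
        Real.log (a i) * ((u : EuclideanSpace ℝ (Fin n)) i) ^ 2) σ :=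
    fun i => integrable_of_continuous (continuous_const.mul ((cont_coord i).pow 2))
  have hgsum_int : Integrable (fun u : sphere (0 : EuclideanSpace ℝ (Fin n)) 1 =>
      ∑ i, Real.log (a i) * ((u : EuclideanSpace ℝ (Fin n)) i) ^ 2) σ :=
    integrable_finset_sum _ fun i _ => hg_int i
  have hpt : ∀ u : sphere (0 : EuclideanSpace ℝ (Fin n)) 1,
      ∑ i, Real.log (a i) * ((u : EuclideanSpace ℝ (Fin n)) i) ^ 2 ≤
        Real.log (∑ i, a i * ((u : EuclideanSpace ℝ (Fin n)) i) ^ 2) := by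
    intro u
    have := strictConcaveOn_log_Ioi.concaveOn.le_map_sum (t := Finset.univ)
      (w := fun i => ((u : EuclideanSpace ℝ (Fin n)) i) ^ 2) (p := a)
      (fun i _ => sq_nonneg _) (sphere_sum_sq u) (fun i _ => ha i)
    simpa [smul_eq_mul, mul_comm] using this
  have key : ∫ u, (∑ i, Real.log (a i) * ((u : EuclideanSpace ℝ (Fin n)) i) ^ 2) ∂σ = 0 := by
    rw [integral_finset_sum _ fun i _ => hg_int i]
    have hswap : ∀ i : Fin n, ∫ u, ((u : EuclideanSpace ℝ (Fin n)) i) ^ 2 ∂σ =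
        ∫ u, ((u : EuclideanSpace ℝ (Fin n)) ⟨0, hn⟩) ^ 2 ∂σ := by
      intro i
      set L := LinearIsometryEquiv.piLpCongrLeft 2 ℝ ℝ (Equiv.swap i ⟨0, hn⟩) with hL
      have h := uniSphere_comp L
        (fun u : sphere (0 : EuclideanSpace ℝ (Fin n)) 1 =>
          ((u : EuclideanSpace ℝ (Fin n)) ⟨0, hn⟩) ^ 2)
      rw [hσ, ← h]
      congr 1
      funext u
      have : ((sphereMEquiv L u : EuclideanSpace ℝ (Fin n))) ⟨0, hn⟩ =
          (u : EuclideanSpace ℝ (Fin n)) i := by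
        rw [sphereMEquiv_apply_coe, hL]
        simp only [LinearIsometryEquiv.piLpCongrLeft_apply, Equiv.piCongrLeft'_apply,
          Equiv.symm_swap]
        rw [Equiv.swap_apply_right]
      rw [this]
    calc ∑ i, ∫ u, Real.log (a i) * ((u : EuclideanSpace ℝ (Fin n)) i) ^ 2 ∂σ
        = ∑ i, Real.log (a i) * ∫ u, ((u : EuclideanSpace ℝ (Fin n)) i) ^ 2 ∂σ := by
          simp [integral_const_mul]
      _ = (∑ i, Real.log (a i)) * ∫ u, ((u : EuclideanSpace ℝ (Fin n)) ⟨0, hn⟩) ^ 2 ∂σ := by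
          rw [Finset.sum_mul]
          exact Finset.sum_congr rfl fun i _ => by rw [hswap i]
      _ = 0 := by
          rw [← Real.log_prod fun i _ => (ha i).ne', hprod, Real.log_one, zero_mul]
  calc (0:ℝ) = ∫ u, (∑ i, Real.log (a i) * ((u : EuclideanSpace ℝ (Fin n)) i) ^ 2) ∂σ := key.symm
    _ ≤ _ := integral_mono hgsum_int hf_int fun u => hpt u
end

section
/- Let A = diag(d₁, …, dₙ) with d₁ ≥ d₂ ≥ … ≥ dₙ ≥ 0, and let M be an n×n real matrix with max_i ∑_{j=1}^n |M_{ij}| ≤ 1 (each row sum of absolute values is at most 1). For t ≥ 0 set A_t = A(I + tM). Then d₁(1 + 2t) ≥ ρ(A_t) ≥ d₁(1 − 2nt), where ρ denotes the spectral radius. -/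
open MeasureTheory Matrix Metric

/-!
Gershgorin's theorem puts every eigenvalue of `diag d * (1 + s • M)` (for `s ≥ 0`) in one of the
discs `|z - d i| ≤ s * d i`, which gives the upper bound. For the lower bound, follow the chain of
discs of radius `t * d i` that overlap consecutively starting from `d 0`; each step of the chain
lowers the centre by at most `2 t d 0`, and the chain ends at a real-part gap separating it from
all remaining discs. The eigenvalue `d 0` of `diag d` cannot leave this cluster as `s` runs from
`0` to `t`: eigenvalues move continuously, because `|det (z - B)| < δ ^ n` forces an eigenvalue
of `B` within `δ` of `z`.
-/

open Polynomial Set Filter Topology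

theorem Polynomial.Splits.exists_mem_roots_norm_sub_lt {K : Type*} [NormedField K]
    {p : K[X]} (hs : p.Splits) (hm : p.Monic) {z : K} {δ : ℝ} (hδ : 0 ≤ δ)
    (h : ‖p.eval z‖ < δ ^ p.natDegree) : ∃ w ∈ p.roots, ‖z - w‖ < δ := by
  by_contra! hfar
  refine h.not_ge ?_
  calc δ ^ p.natDegree = (p.roots.map fun _ => δ).prod := by
        rw [Multiset.map_const', Multiset.prod_replicate, splits_iff_card_roots.mp hs]
    _ ≤ (p.roots.map fun w => ‖z - w‖).prod :=
        Multiset.prod_map_le_prod_map₀ _ _ (fun _ _ => hδ) hfar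
    _ = ‖p.eval z‖ := by
        rw [hs.eval_eq_prod_roots_of_monic hm, ← normHom_apply, map_multiset_prod,
          Multiset.map_map]; rfl

namespace Matrix

variable {ι : Type*} [Fintype ι] [DecidableEq ι]

theorem mem_spectrum_iff_det_scalar_sub_eq_zero {K : Type*} [Field K] (B : Matrix ι ι K)
    (z : K) : z ∈ spectrum K B ↔ (scalar ι z - B).det = 0 := by
  rw [← spectrum_toLin', Module.End.mem_spectrum_iff_isRoot_charpoly, charpoly_toLin',
    IsRoot.def, eval_charpoly]

theorem exists_norm_sub_le_of_mem_spectrum {K : Type*} [NormedField K] {B : Matrix ι ι K}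
    {z : K} (hz : z ∈ spectrum K B) (c : ι → K) :
    ∃ i, ‖z - c i‖ ≤ ∑ j, ‖(B - diagonal c) i j‖ := by
  obtain ⟨i, hi⟩ := eigenvalue_mem_ball
    (Module.End.hasEigenvalue_iff_mem_spectrum.mpr ((spectrum_toLin' B).symm ▸ hz))
  refine ⟨i, ?_⟩
  have hoff : ∑ j ∈ Finset.univ.erase i, ‖(B - diagonal c) i j‖
      = ∑ j ∈ Finset.univ.erase i, ‖B i j‖ :=
    Finset.sum_congr rfl fun j hj => by
      rw [sub_apply, diagonal_apply_ne _ (Finset.ne_of_mem_erase hj).symm, sub_zero]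
  rw [← Finset.add_sum_erase _ _ (Finset.mem_univ i), hoff, sub_apply, diagonal_apply_eq,
    add_comm]
  exact (norm_sub_le_norm_sub_add_norm_sub z (B i i) (c i)).trans
    (add_le_add_left (by simpa [dist_eq_norm] using hi) _)

theorem exists_mem_spectrum_norm_sub_lt (B : Matrix ι ι ℂ) {z : ℂ} {δ : ℝ} (hδ : 0 ≤ δ)
    (h : ‖(scalar ι z - B).det‖ < δ ^ Fintype.card ι) : ∃ w ∈ spectrum ℂ B, ‖z - w‖ < δ := by
  rw [← eval_charpoly, ← B.charpoly_natDegree_eq_dim] at h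
  obtain ⟨w, hw, hzw⟩ :=
    (IsAlgClosed.splits B.charpoly).exists_mem_roots_norm_sub_lt B.charpoly_monic hδ h
  refine ⟨w, ?_, hzw⟩
  rw [mem_spectrum_iff_det_scalar_sub_eq_zero, ← eval_charpoly]
  exact (mem_roots B.charpoly_monic.ne_zero).mp hw

theorem isClosed_setOf_exists_mem_spectrum {X : Type*} [TopologicalSpace X]
    {Φ : X → Matrix ι ι ℂ} (hΦ : Continuous Φ) {W : Set ℂ} (hW : IsCompact W) :
    IsClosed {x | ∃ z ∈ W, z ∈ spectrum ℂ (Φ x)} := by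
  have : CompactSpace W := isCompact_iff_compactSpace.mp hW
  have hzero : IsClosed {p : X × W | (scalar ι (p.2 : ℂ) - Φ p.1).det = 0} :=
    isClosed_eq (by simp only [scalar_apply]; fun_prop) continuous_const
  convert isClosedMap_fst_of_compactSpace _ hzero using 1
  ext x
  simp [mem_spectrum_iff_det_scalar_sub_eq_zero]

theorem exists_mem_spectrum_of_continuous_of_disjoint {Φ : ℝ → Matrix ι ι ℂ}
    (hΦ : Continuous Φ) {t : ℝ} (ht : 0 ≤ t) {W V : Set ℂ} (hW : IsCompact W)
    (hV : IsClosed V) (hWV : Disjoint W V) (hcover : ∀ s ∈ Icc 0 t, spectrum ℂ (Φ s) ⊆ W ∪ V)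
    (h0 : ∃ z ∈ W, z ∈ spectrum ℂ (Φ 0)) : ∃ z ∈ W, z ∈ spectrum ℂ (Φ t) := by
  refine ((isClosed_setOf_exists_mem_spectrum hΦ hW).inter isClosed_Icc
    |>.Icc_subset_of_forall_mem_nhdsWithin h0 ?_) ⟨ht, le_rfl⟩
  rintro s ⟨⟨z, hzW, hz⟩, hs⟩
  obtain ⟨δ, hδ, hball⟩ :=
    Metric.isOpen_iff.mp hV.isOpen_compl z (hWV.notMem_of_mem_left hzW)
  have hdet : Tendsto (fun s' => ‖(scalar ι z - Φ s').det‖) (𝓝 s) (𝓝 0) := by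
    have hcont : Continuous fun s' => ‖(scalar ι z - Φ s').det‖ := by fun_prop
    simpa only [(mem_spectrum_iff_det_scalar_sub_eq_zero _ _).mp hz, norm_zero]
      using hcont.tendsto s
  filter_upwards [nhdsWithin_le_nhds (hdet.eventually_lt_const (pow_pos hδ _)),
    Ioo_mem_nhdsGT hs.2] with s' hsmall hs'
  obtain ⟨w, hw, hzw⟩ := exists_mem_spectrum_norm_sub_lt _ hδ.le hsmall
  have hwV : w ∉ V := hball (by rwa [Metric.mem_ball, dist_comm, dist_eq_norm])
  exact ⟨w, (hcover s' (Ioo_subset_Icc_self ⟨hs.1.trans_lt hs'.1, hs'.2⟩) hw).resolve_right hwV,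
    hw⟩

end Matrix

theorem Complex.abs_re_sub_le_of_mem_closedBall {x r : ℝ} {z : ℂ}
    (hz : z ∈ closedBall (x : ℂ) r) : |z.re - x| ≤ r := by
  simpa using (Complex.abs_re_le_norm (z - x)).trans (mem_closedBall_iff_norm.mp hz)

/-- `k` ends the chain of overlapping intervals `[D j * (1 - t), D j * (1 + t)]` that starts at
`j = 0`. -/
theorem Antitone.exists_first_gap {D : ℕ → ℝ} (hD : Antitone D) {t : ℝ} (ht : 0 ≤ t) {n : ℕ}
    (hn : 0 < n) : ∃ k < n, D 0 * (1 - 2 * t * k) ≤ D k ∧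
      ∀ j, k < j → j < n → D j * (1 + t) < D k * (1 - t) := by
  have hex : ∃ k, k + 1 < n → D (k + 1) * (1 + t) < D k * (1 - t) :=
    ⟨n - 1, fun h => absurd h (by omega)⟩
  set k := Nat.find hex
  have hkn : k < n := by
    by_contra! hk
    exact Nat.find_min hex (show n - 1 < k by omega) fun h => absurd h (by omega)
  have hchain : ∀ m ≤ k, D 0 * (1 - 2 * t * m) ≤ D m := by
    intro m
    induction m with
    | zero => simp
    | succ m ih =>
      intro hm
      have hoverlap : D m * (1 - t) ≤ D (m + 1) * (1 + t) := by
        by_contra! hgap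
        exact Nat.find_min hex (show m < k by omega) fun _ => hgap
      have h1 : t * D m ≤ t * D 0 := mul_le_mul_of_nonneg_left (hD (Nat.zero_le _)) ht
      have h2 : t * D (m + 1) ≤ t * D 0 := mul_le_mul_of_nonneg_left (hD (Nat.zero_le _)) ht
      push_cast
      linarith [ih (by omega)]
  refine ⟨k, hkn, hchain k le_rfl, fun j hkj hjn => ?_⟩
  calc D j * (1 + t) ≤ D (k + 1) * (1 + t) :=
        mul_le_mul_of_nonneg_right (hD hkj) (by linarith)
    _ < D k * (1 - t) := Nat.find_spec hex (by omega)

section DiagonalPerturbation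

variable {ι : Type*} [Fintype ι] [DecidableEq ι] {d : ι → ℝ} {M : Matrix ι ι ℝ}

theorem exists_norm_sub_le_of_mem_spectrum_diagonal_mul (hd : ∀ i, 0 ≤ d i)
    (hM : ∀ i, ∑ j, |M i j| ≤ 1) {s : ℝ} (hs : 0 ≤ s) {z : ℂ}
    (hz : z ∈ spectrum ℂ ((diagonal d * (1 + s • M)).map ((↑) : ℝ → ℂ))) :
    ∃ i, ‖z - d i‖ ≤ s * d i := by
  obtain ⟨i, hi⟩ := Matrix.exists_norm_sub_le_of_mem_spectrum hz fun i => (d i : ℂ)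
  refine ⟨i, hi.trans ?_⟩
  have hentry : ∀ j, ‖((diagonal d * (1 + s • M)).map ((↑) : ℝ → ℂ)
      - diagonal fun i => (d i : ℂ)) i j‖ = s * d i * |M i j| := by
    intro j
    rcases eq_or_ne i j with rfl | hij
    · simp [diagonal_mul, abs_of_nonneg (hd i), abs_of_nonneg hs, mul_add]
      ring
    · simp [diagonal_mul, hij, abs_of_nonneg (hd i), abs_of_nonneg hs]
      ring
  simp only [hentry, ← Finset.mul_sum]
  exact mul_le_of_le_one_right (mul_nonneg hs (hd i)) (hM i)

theorem exists_mem_spectrum_diagonal_mul_le_re (hd : ∀ i, 0 ≤ d i)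
    (hM : ∀ i, ∑ j, |M i j| ≤ 1) {t : ℝ} (ht : 0 ≤ t) {c : ℝ}
    (hgap : ∀ i, c ≤ d i * (1 - t) ∨ d i * (1 + t) < c) (hne : ∃ i, c ≤ d i * (1 - t)) :
    ∃ z ∈ spectrum ℂ ((diagonal d * (1 + t • M)).map ((↑) : ℝ → ℂ)), c ≤ z.re := by
  set S := {i | c ≤ d i * (1 - t)}
  have hdisc : ∀ i, ∀ z ∈ closedBall (d i : ℂ) (t * d i),
      d i * (1 - t) ≤ z.re ∧ z.re ≤ d i * (1 + t) := fun i z hz => by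
    have := abs_le.mp (Complex.abs_re_sub_le_of_mem_closedBall hz)
    constructor <;> linarith [this.1, this.2]
  have hdisj : Disjoint (⋃ i ∈ S, closedBall (d i : ℂ) (t * d i))
      (⋃ i ∈ Sᶜ, closedBall (d i : ℂ) (t * d i)) := by
    refine Set.disjoint_left.mpr fun z hzS hzSc => ?_
    obtain ⟨i, hi, hzi⟩ := mem_iUnion₂.mp hzS
    obtain ⟨j, hj, hzj⟩ := mem_iUnion₂.mp hzSc
    have := (hgap j).resolve_left hj
    linarith [(hdisc i z hzi).1, (hdisc j z hzj).2, show c ≤ d i * (1 - t) from hi]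
  have hcover : ∀ s ∈ Icc 0 t, spectrum ℂ ((diagonal d * (1 + s • M)).map ((↑) : ℝ → ℂ))
      ⊆ (⋃ i ∈ S, closedBall (d i : ℂ) (t * d i)) ∪ ⋃ i ∈ Sᶜ, closedBall (d i : ℂ) (t * d i) := by
    intro s hs w hw
    obtain ⟨i, hi⟩ := exists_norm_sub_le_of_mem_spectrum_diagonal_mul hd hM hs.1 hw
    have hwi : w ∈ closedBall (d i : ℂ) (t * d i) :=
      mem_closedBall_iff_norm.mpr (hi.trans (mul_le_mul_of_nonneg_right hs.2 (hd i)))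
    by_cases hiS : i ∈ S
    · exact Or.inl (mem_biUnion hiS hwi)
    · exact Or.inr (mem_biUnion hiS hwi)
  have hstart : ∃ z ∈ ⋃ i ∈ S, closedBall (d i : ℂ) (t * d i),
      z ∈ spectrum ℂ ((diagonal d * (1 + (0 : ℝ) • M)).map ((↑) : ℝ → ℂ)) := by
    obtain ⟨i, hi⟩ := hne
    refine ⟨d i, mem_biUnion hi (mem_closedBall_self (mul_nonneg ht (hd i))), ?_⟩
    simp
  obtain ⟨z, hzS, hz⟩ := Matrix.exists_mem_spectrum_of_continuous_of_disjoint
    (Φ := fun s => (diagonal d * (1 + s • M)).map ((↑) : ℝ → ℂ)) (by fun_prop) ht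
    (S.toFinite.isCompact_biUnion fun _ _ => isCompact_closedBall _ _)
    (Sᶜ.toFinite.isClosed_biUnion fun _ _ => isClosed_closedBall) hdisj hcover hstart
  obtain ⟨i, hi, hzi⟩ := mem_iUnion₂.mp hzS
  exact ⟨z, hz, le_trans hi (hdisc i z hzi).1⟩

end DiagonalPerturbation

section SpectralRadius

variable {n : ℕ} {B : Matrix (Fin n) (Fin n) ℝ}

theorem specRad_le {c : ℝ} (hc : 0 ≤ c)
    (h : ∀ z ∈ spectrum ℂ (B.map ((↑) : ℝ → ℂ)), ‖z‖ ≤ c) : specRad B ≤ c :=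
  Real.sSup_le (by rintro _ ⟨z, hz, rfl⟩; exact h z hz) hc

theorem norm_le_specRad {z : ℂ} (hz : z ∈ spectrum ℂ (B.map ((↑) : ℝ → ℂ))) :
    ‖z‖ ≤ specRad B :=
  le_csSup ((Matrix.finite_spectrum _).image _).bddAbove ⟨z, hz, rfl⟩

theorem specRad_nonneg : 0 ≤ specRad B :=
  Real.sSup_nonneg (by rintro _ ⟨z, -, rfl⟩; exact norm_nonneg z)

end SpectralRadius

theorem specRad_diagonal_mul_le {n : ℕ} {d : Fin n → ℝ} (hd0 : ∀ i, 0 ≤ d i) {c : ℝ}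
    (hc : 0 ≤ c) (hdc : ∀ i, d i ≤ c) {M : Matrix (Fin n) (Fin n) ℝ}
    (hM : ∀ i, ∑ j, |M i j| ≤ 1) {t : ℝ} (ht : 0 ≤ t) :
    specRad (diagonal d * (1 + t • M)) ≤ c * (1 + t) := by
  refine specRad_le (mul_nonneg hc (by linarith)) fun z hz => ?_
  obtain ⟨i, hi⟩ := exists_norm_sub_le_of_mem_spectrum_diagonal_mul hd0 hM ht hz
  calc ‖z‖ ≤ ‖(d i : ℂ)‖ + ‖z - d i‖ := norm_le_norm_add_norm_sub' z _
    _ ≤ d i * (1 + t) := by rw [Complex.norm_real, Real.norm_of_nonneg (hd0 i)]; linarith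
    _ ≤ c * (1 + t) := mul_le_mul_of_nonneg_right (hdc i) (by linarith)

theorem exists_mem_spectrum_diagonal_mul_norm_ge {n : ℕ} (hn : 0 < n) {d : Fin n → ℝ}
    (hd : Antitone d) (hd0 : ∀ i, 0 ≤ d i) {M : Matrix (Fin n) (Fin n) ℝ}
    (hM : ∀ i, ∑ j, |M i j| ≤ 1) {t : ℝ} (ht : 0 ≤ t) (ht1 : t ≤ 1) :
    ∃ z ∈ spectrum ℂ ((diagonal d * (1 + t • M)).map ((↑) : ℝ → ℂ)),
      d ⟨0, hn⟩ * (1 - 2 * n * t) ≤ ‖z‖ := by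
  set D : ℕ → ℝ := fun j => d ⟨min j (n - 1), by omega⟩
  have hD : Antitone D := fun a b hab => hd (Fin.mk_le_mk.mpr (min_le_min_right _ hab))
  have hDd : ∀ i : Fin n, D i = d i := fun i => congrArg d (Fin.ext (min_eq_left (by omega)))
  obtain ⟨k, hkn, hDk, hgap⟩ := hD.exists_first_gap ht hn
  have hcluster : ∀ i : Fin n,
      D k * (1 - t) ≤ d i * (1 - t) ∨ d i * (1 + t) < D k * (1 - t) := by
    intro i
    rw [← hDd]
    rcases le_or_gt (i : ℕ) k with hik | hki
    · exact Or.inl (mul_le_mul_of_nonneg_right (hD hik) (by linarith))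
    · exact Or.inr (hgap i hki i.isLt)
  obtain ⟨z, hz, hre⟩ := exists_mem_spectrum_diagonal_mul_le_re hd0 hM ht hcluster
    ⟨⟨k, hkn⟩, by rw [← hDd]⟩
  refine ⟨z, hz, ?_⟩
  have hk : (k : ℝ) + 1 ≤ n := by exact_mod_cast hkn
  have hD0 : D 0 = d ⟨0, hn⟩ := hDd ⟨0, hn⟩
  calc d ⟨0, hn⟩ * (1 - 2 * n * t) ≤ D 0 * (1 - 2 * t * k) * (1 - t) := by
        rw [hD0]
        nlinarith [mul_nonneg (hd0 ⟨0, hn⟩) ht,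
          mul_nonneg (mul_nonneg (hd0 ⟨0, hn⟩) ht) (sub_nonneg.mpr hk),
          mul_nonneg (mul_nonneg (hd0 ⟨0, hn⟩) ht) (mul_nonneg ht k.cast_nonneg)]
    _ ≤ D k * (1 - t) := mul_le_mul_of_nonneg_right hDk (by linarith)
    _ ≤ z.re := hre
    _ ≤ ‖z‖ := Complex.re_le_norm z

/-- Let `A = diag (d 0, …, d (n-1))` with `d 0 ≥ … ≥ d (n-1) ≥ 0`, and
let `M` have all row absolute sums at most `1`.  For `t ≥ 0` and `A_t = A (I + t M)`, the
spectral radius satisfies `d 0 (1 + 2t) ≥ ρ(A_t) ≥ d 0 (1 − 2nt)`. -/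
theorem specRad_perturbation_bounds (n : ℕ) (hn : 0 < n)
    (d : Fin n → ℝ) (hd : Antitone d) (hd0 : ∀ i, 0 ≤ d i)
    (M : Matrix (Fin n) (Fin n) ℝ) (hM : ∀ i, (∑ j, |M i j|) ≤ 1)
    (t : ℝ) (ht : 0 ≤ t) :
    specRad (Matrix.diagonal d * (1 + t • M)) ≤ d ⟨0, hn⟩ * (1 + 2 * t)
      ∧ d ⟨0, hn⟩ * (1 - 2 * n * t) ≤ specRad (Matrix.diagonal d * (1 + t • M)) := by
  have hdmax : ∀ i, d i ≤ d ⟨0, hn⟩ := fun i => hd (Fin.mk_le_mk.mpr (Nat.zero_le i))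
  constructor
  · calc specRad (diagonal d * (1 + t • M)) ≤ d ⟨0, hn⟩ * (1 + t) :=
          specRad_diagonal_mul_le hd0 (hd0 _) hdmax hM ht
      _ ≤ d ⟨0, hn⟩ * (1 + 2 * t) := mul_le_mul_of_nonneg_left (by linarith) (hd0 _)
  · rcases le_or_gt t 1 with ht1 | ht1
    · obtain ⟨z, hz, hbound⟩ := exists_mem_spectrum_diagonal_mul_norm_ge hn hd hd0 hM ht ht1
      exact hbound.trans (norm_le_specRad hz)
    · have hn1 : (1 : ℝ) ≤ n := by exact_mod_cast hn
      have hneg : 1 - 2 * n * t ≤ 0 := by nlinarith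
      exact (mul_nonpos_of_nonneg_of_nonpos (hd0 _) hneg).trans specRad_nonneg
end

section
/- Let X ∈ SO(2) be a rotation matrix with X ≠ I and X ≠ −I. Then the function s ↦ log ρ(diag(eˢ, e⁻ˢ) X) is differentiable at s = 0 with derivative 0; in fact there is a neighborhood of 0 on which ρ(diag(eˢ, e⁻ˢ) X) = 1 identically, where ρ denotes the spectral radius. -/
open Matrix Real

lemma mem_spectrum_fin_two (A : Matrix (Fin 2) (Fin 2) ℝ) (z : ℂ) :
    z ∈ spectrum ℂ (A.map (fun x => (x:ℂ))) ↔ z^2 - A.trace * z + A.det = 0 := by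
  rw [spectrum.mem_iff, Matrix.isUnit_iff_isUnit_det, isUnit_iff_ne_zero, not_not]
  have : (algebraMap ℂ (Matrix (Fin 2) (Fin 2) ℂ) z - A.map (fun x => (x:ℂ))).det
      = z^2 - A.trace*z + A.det := by
    simp [Matrix.det_fin_two, Matrix.trace_fin_two, Matrix.algebraMap_matrix_apply]
    ring
  rw [this]

lemma specRad_eq_one (A : Matrix (Fin 2) (Fin 2) ℝ) (hdet : A.det = 1)
    (htr : A.trace ^ 2 < 4) : specRad A = 1 := by
  set t : ℝ := A.trace with ht
  have hb : (0:ℝ) < 1 - t^2/4 := by nlinarith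
  set b : ℝ := Real.sqrt (1 - t^2/4) with hbdef
  have hb2 : b^2 = 1 - t^2/4 := Real.sq_sqrt hb.le
  set lam : ℂ := Complex.mk (t/2) b with hlam
  have hmem : lam ∈ spectrum ℂ (A.map (fun x => (x:ℂ))) := by
    rw [mem_spectrum_fin_two, hdet]
    apply Complex.ext <;>
      simp [hlam, pow_two, Complex.mul_re, Complex.mul_im, Complex.ofReal_re,
        Complex.ofReal_im] <;> nlinarith
  have habs : ∀ z ∈ spectrum ℂ (A.map (fun x => (x:ℂ))), ‖z‖ = 1 := by
    intro z hz
    rw [mem_spectrum_fin_two, hdet] at hz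
    have hre := congrArg Complex.re hz
    have him := congrArg Complex.im hz
    simp [pow_two, Complex.mul_re, Complex.mul_im] at hre him
    have hzim : z.im ≠ 0 := by
      intro h0
      rw [h0] at hre
      simp at hre
      nlinarith [sq_nonneg (2*z.re - A.trace)]
    have h2 : z.re * 2 = A.trace := by
      have hfac : z.im * (z.re * 2 - A.trace) = 0 := by linarith
      rcases mul_eq_zero.mp hfac with h | h
      · exact absurd h hzim
      · linarith
    have hsq : z.re^2 + z.im^2 = 1 := by linear_combination -hre + z.re * h2
    have : ‖z‖ = Real.sqrt (z.re^2 + z.im^2) := by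
      rw [Complex.norm_def, Complex.normSq_apply]; ring_nf
    rw [this, hsq, Real.sqrt_one]
  have himg : (fun z : ℂ => ‖z‖) '' spectrum ℂ (A.map (fun x => (x:ℂ))) = {1} := by
    apply Set.eq_singleton_iff_nonempty_unique_mem.2
    refine ⟨⟨‖lam‖, Set.mem_image_of_mem _ hmem⟩, ?_⟩
    rintro x ⟨z, hz, rfl⟩; exact habs z hz
  rw [specRad, himg, csSup_singleton]

/-- Let `X ∈ SO(2)` (a rotation matrix) with `X ≠ I` and `X ≠ −I`.
Then `s ↦ log ρ(diag (eˢ, e⁻ˢ) X)` is differentiable at `0` with derivative `0`; in fact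
`ρ(diag (eˢ, e⁻ˢ) X) = 1` identically in a neighborhood of `0`. -/
theorem deriv_log_specRad_rotation_eq_zero (X : Matrix (Fin 2) (Fin 2) ℝ)
    (hX : ∃ θ : ℝ, X = !![Real.cos θ, Real.sin θ; -Real.sin θ, Real.cos θ])
    (hX1 : X ≠ 1) (hXneg : X ≠ -1) :
    HasDerivAt (fun s : ℝ =>
        Real.log (specRad (Matrix.diagonal ![Real.exp s, Real.exp (-s)] * X))) 0 0
    ∧ ∃ δ : ℝ, 0 < δ ∧ ∀ s : ℝ, |s| < δ →
        specRad (Matrix.diagonal ![Real.exp s, Real.exp (-s)] * X) = 1 := by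
  obtain ⟨θ, rfl⟩ := hX
  have hpy : Real.cos θ ^ 2 + Real.sin θ ^ 2 = 1 := by
    rw [add_comm]; exact Real.sin_sq_add_cos_sq θ
  have hcos : Real.cos θ ^ 2 < 1 := by
    rcases lt_or_eq_of_le (by nlinarith [sq_nonneg (Real.sin θ)] : Real.cos θ ^2 ≤ 1) with h | h
    · exact h
    · exfalso
      have hsin : Real.sin θ = 0 := by nlinarith
      have hfac : (Real.cos θ - 1) * (Real.cos θ + 1) = 0 := by nlinarith
      rcases mul_eq_zero.mp hfac with hc | hc
      · apply hX1
        have hc1 : Real.cos θ = 1 := by linarith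
        rw [hc1, hsin, Matrix.one_fin_two]; norm_num
      · apply hXneg
        have hc1 : Real.cos θ = -1 := by linarith
        rw [hc1, hsin]
        ext i j; fin_cases i <;> fin_cases j <;> simp [Matrix.one_fin_two]
  -- trace and det
  have htr : ∀ s : ℝ,
      (Matrix.diagonal ![Real.exp s, Real.exp (-s)] *
        !![Real.cos θ, Real.sin θ; -Real.sin θ, Real.cos θ]).trace
      = (Real.exp s + Real.exp (-s)) * Real.cos θ := by
    intro s
    simp [Matrix.trace_fin_two, Matrix.mul_apply, Fin.sum_univ_two, Matrix.diagonal]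
    ring
  have hdet : ∀ s : ℝ,
      (Matrix.diagonal ![Real.exp s, Real.exp (-s)] *
        !![Real.cos θ, Real.sin θ; -Real.sin θ, Real.cos θ]).det = 1 := by
    intro s
    rw [Matrix.det_mul, Matrix.det_diagonal]
    simp [Fin.prod_univ_two, Matrix.det_fin_two_of, ← Real.exp_add]
    nlinarith
  have hcont : ContinuousAt (fun s : ℝ =>
      ((Real.exp s + Real.exp (-s)) * Real.cos θ)^2) 0 := by fun_prop
  have hf0 : ((Real.exp 0 + Real.exp (-0)) * Real.cos θ)^2 < 4 := by
    simp; nlinarith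
  have hev : ∀ᶠ s in nhds (0:ℝ),
      ((Real.exp s + Real.exp (-s)) * Real.cos θ)^2 < 4 :=
    hcont.eventually_lt continuousAt_const hf0
  have key : ∀ s : ℝ, ((Real.exp s + Real.exp (-s)) * Real.cos θ)^2 < 4 →
      specRad (Matrix.diagonal ![Real.exp s, Real.exp (-s)] *
        !![Real.cos θ, Real.sin θ; -Real.sin θ, Real.cos θ]) = 1 := by
    intro s hs
    exact specRad_eq_one _ (hdet s) (by rw [htr s]; exact hs)
  constructor
  · have heq : (fun s : ℝ => Real.log (specRad (Matrix.diagonal ![Real.exp s, Real.exp (-s)] *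
        !![Real.cos θ, Real.sin θ; -Real.sin θ, Real.cos θ]))) =ᶠ[nhds 0]
        (fun _ => (0:ℝ)) := by
      filter_upwards [hev] with s hs
      rw [key s hs, Real.log_one]
    exact (hasDerivAt_const (0:ℝ) (0:ℝ)).congr_of_eventuallyEq heq
  · obtain ⟨δ, hδ, hδ'⟩ := Metric.eventually_nhds_iff.mp hev
    refine ⟨δ, hδ, fun s hs => key s (hδ' ?_)⟩
    rwa [Real.dist_eq, sub_zero]
end
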